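/- arXiv:2601.06685 — 3 statements merged into one kernel-verified Lean document; each statement's English description precedes it below -/
import Mathlib

section
/- Let X and C be independent real-valued random variables on a probability space, and suppose the CDF F of X, defined by F(x) = P(X ≤ x), is continuous; let S = 1 − F. Set T = min(X, C), let Δ be the indicator of {X ≤ C}, and let ℛ = Δ·F(T) + (1 − Δ)·(1 − S(T)/2). Then Var(ℛ) = (1/12)·(1 − E[ S(C)³ ]). -/
/-!
For continuous `F`, the variable `F(X)` is uniform on `[0, 1]` (probability integral transform),
and `X ≤ c ↔ F X ≤ F c` almost surely. Hence, given `C = c`, the imputed rank is `h(U)` for `U`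
uniform, with `h u = u` on `[0, F c]` and `h u = (1 + F c) / 2` above. Its conditional mean is
`F(c)² / 2 + (1 - F c)(1 + F c) / 2 = 1 / 2` for every `c`, and its conditional second moment is
`F(c)³ / 3 + (1 - F c)(1 + F c)² / 4 = 1 / 3 - S(c)³ / 12`. Independence lets us average these over
`C`, which gives `Var ℛ = 1 / 3 - E[S(C)³] / 12 - 1 / 4`.
-/

open MeasureTheory Set

namespace ProbabilityTheory

theorem cdf_mem_Icc (μ : Measure ℝ) (x : ℝ) : cdf μ x ∈ Icc 0 1 :=
  ⟨cdf_nonneg μ x, cdf_le_one μ x⟩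

section ContinuousCDF

variable {μ : Measure ℝ} [IsProbabilityMeasure μ]

/-- `{x | F x ≤ F c}` is a closed down-set, hence an `Iic b` on which `F b = F c`. -/
theorem measure_cdf_le_cdf (hμ : Continuous (cdf μ)) (c : ℝ) :
    μ {x | cdf μ x ≤ cdf μ c} = μ (Iic c) := by
  set S := {x | cdf μ x ≤ cdf μ c}
  rcases (cdf_le_one μ c).eq_or_lt with h1 | h1
  · have hS : S = univ := eq_univ_of_forall fun x => (cdf_le_one μ x).trans h1.ge
    rw [hS, measure_univ, ← ofReal_cdf, h1, ENNReal.ofReal_one]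
  have hbdd : BddAbove S := by
    obtain ⟨b, hb⟩ := ((tendsto_cdf_atTop μ).eventually_const_lt h1).exists
    exact ⟨b, fun x hx => le_of_not_gt fun hbx => (hb.trans_le (monotone_cdf μ hbx.le)).not_ge hx⟩
  have hmem : sSup S ∈ S :=
    (isClosed_le hμ continuous_const).csSup_mem ⟨c, show cdf μ c ≤ cdf μ c from le_rfl⟩ hbdd
  have hS : S = Iic (sSup S) :=
    Subset.antisymm (fun x hx => le_csSup hbdd hx) fun x hx => (monotone_cdf μ hx).trans hmem
  have hcdf : cdf μ (sSup S) = cdf μ c :=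
    le_antisymm hmem (monotone_cdf μ (le_csSup hbdd (le_refl (cdf μ c))))
  rw [hS, ← ofReal_cdf, ← ofReal_cdf, hcdf]

theorem measure_cdf_le (hμ : Continuous (cdf μ)) {u : ℝ} (hu : u ∈ Icc 0 1) :
    μ {x | cdf μ x ≤ u} = ENNReal.ofReal u := by
  by_cases hu_range : u ∈ range (cdf μ)
  · obtain ⟨c, rfl⟩ := hu_range
    rw [measure_cdf_le_cdf hμ, ofReal_cdf]
  have hIoo : Ioo 0 1 ⊆ range (cdf μ) := fun v hv =>
    mem_range_of_exists_le_of_exists_ge hμ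
      ((tendsto_cdf_atBot μ).eventually_le_const hv.1).exists
      ((tendsto_cdf_atTop μ).eventually_const_le hv.2).exists
  rcases hu.1.eq_or_lt with rfl | h0
  · have hempty : {x | cdf μ x ≤ 0} = ∅ :=
      eq_empty_of_forall_notMem fun x hx => hu_range ⟨x, le_antisymm hx (cdf_nonneg μ x)⟩
    rw [hempty, measure_empty, ENNReal.ofReal_zero]
  rcases hu.2.eq_or_lt with rfl | h1
  · have huniv : {x | cdf μ x ≤ 1} = univ := eq_univ_of_forall (cdf_le_one μ)
    rw [huniv, measure_univ, ENNReal.ofReal_one]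
  · exact absurd (hIoo ⟨h0, h1⟩) hu_range

theorem map_cdf_eq_restrict_Ioc (hμ : Continuous (cdf μ)) :
    μ.map (cdf μ) = volume.restrict (Ioc 0 1) := by
  have : IsProbabilityMeasure (μ.map (cdf μ)) := Measure.isProbabilityMeasure_map hμ.aemeasurable
  refine Measure.ext_of_Iic _ _ fun a => ?_
  rw [Measure.map_apply hμ.measurable measurableSet_Iic, Measure.restrict_apply measurableSet_Iic,
    inter_comm, Ioc_inter_Iic, Real.volume_Ioc, sub_zero]
  rcases lt_or_ge a 0 with ha | ha
  · rw [ENNReal.ofReal_eq_zero.2 ((min_le_right _ _).trans ha.le)]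
    exact measure_mono_null (fun x (hx : cdf μ x ≤ a) => (hx.trans_lt ha).not_ge (cdf_nonneg μ x))
      measure_empty
  · have hpre : cdf μ ⁻¹' Iic a = {x | cdf μ x ≤ 1 ⊓ a} := by
      ext x
      simp [cdf_le_one]
    rw [hpre, measure_cdf_le hμ ⟨le_min zero_le_one ha, min_le_left _ _⟩]

theorem setIntegral_Iic_comp_cdf (hμ : Continuous (cdf μ)) {g : ℝ → ℝ}
    (hg : IntegrableOn g (Ioc 0 1)) (c : ℝ) :
    ∫ x in Iic c, g (cdf μ x) ∂μ = ∫ u in 0..cdf μ c, g u := by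
  have hae : Iic c =ᵐ[μ] cdf μ ⁻¹' Iic (cdf μ c) :=
    ae_eq_of_subset_of_measure_ge (fun x hx => monotone_cdf μ hx) (measure_cdf_le_cdf hμ c).le
      measurableSet_Iic.nullMeasurableSet (measure_ne_top _ _)
  have hg' : AEStronglyMeasurable g (μ.map (cdf μ)) := by
    rw [map_cdf_eq_restrict_Ioc hμ]
    exact hg.aestronglyMeasurable
  rw [setIntegral_congr_set hae, ← setIntegral_map measurableSet_Iic hg' hμ.aemeasurable,
    map_cdf_eq_restrict_Ioc hμ, Measure.restrict_restrict measurableSet_Iic,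
    Iic_inter_Ioc_of_le (cdf_le_one μ c), intervalIntegral.integral_of_le (cdf_nonneg μ c)]

theorem integral_ite_le_comp_cdf (hμ : Continuous (cdf μ)) {g : ℝ → ℝ}
    (hg : IntegrableOn g (Ioc 0 1)) (c k : ℝ) :
    ∫ x, (if x ≤ c then g (cdf μ x) else k) ∂μ
      = (∫ u in 0..cdf μ c, g u) + (1 - cdf μ c) * k := by
  have hgF : Integrable (fun x => g (cdf μ x)) μ := by
    rw [IntegrableOn, ← map_cdf_eq_restrict_Ioc hμ] at hg
    exact hg.comp_aemeasurable hμ.aemeasurable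
  classical
  have hpw : (fun x => if x ≤ c then g (cdf μ x) else k)
      = (Iic c).piecewise (fun x => g (cdf μ x)) fun _ => k := by
    ext x
    simp only [piecewise, mem_Iic]
  rw [hpw, integral_piecewise measurableSet_Iic hgF.integrableOn (integrable_const k).integrableOn,
    setIntegral_Iic_comp_cdf hμ hg, setIntegral_const, probReal_compl_eq_one_sub measurableSet_Iic,
    ← cdf_eq_real, smul_eq_mul]

end ContinuousCDF

theorem IndepFun.integral_comp_eq_integral_integral_map {Ω α β E : Type*} [MeasurableSpace Ω]
    [MeasurableSpace α] [MeasurableSpace β] [NormedAddCommGroup E] [NormedSpace ℝ E]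
    {P : Measure Ω} [IsFiniteMeasure P] {X : Ω → α} {Y : Ω → β} (hXY : IndepFun X Y P)
    (hX : AEMeasurable X P) (hY : AEMeasurable Y P) {G : α × β → E}
    (hG : Integrable G ((P.map X).prod (P.map Y))) :
    ∫ ω, G (X ω, Y ω) ∂P = ∫ ω, ∫ x, G (x, Y ω) ∂(P.map X) ∂P := by
  have hmap := (indepFun_iff_map_prod_eq_prod_map_map hX hY).1 hXY
  rw [← integral_map (hX.prodMk hY) (hmap ▸ hG.aestronglyMeasurable), hmap,
    integral_prod_symm G hG, integral_map hY hG.integral_prod_right.aestronglyMeasurable]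

end ProbabilityTheory

open ProbabilityTheory

/-- `ℛ` on the event `{X = x, C = c}`: an observed `x` gets its rank `F x`, a value censored at `c`
gets the midpoint of the remaining ranks `[F c, 1]`. -/
noncomputable def imputedRank (F : ℝ → ℝ) (x c : ℝ) : ℝ :=
  if x ≤ c then F x else (1 + F c) / 2

theorem imputedRank_eq (F : ℝ → ℝ) (x c : ℝ) :
    (if x ≤ c then (1 : ℝ) else 0) * F (min x c)
      + (1 - if x ≤ c then (1 : ℝ) else 0) * (1 - (1 - F (min x c)) / 2) = imputedRank F x c := by
  unfold imputedRank
  split_ifs with h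
  · rw [min_eq_left h]
    ring
  · rw [min_eq_right (not_le.1 h).le]
    ring

theorem imputedRank_mem_Icc {F : ℝ → ℝ} (hF : ∀ x, F x ∈ Icc 0 1) (x c : ℝ) :
    imputedRank F x c ∈ Icc 0 1 := by
  unfold imputedRank
  split_ifs
  · exact hF x
  · exact ⟨by linarith [(hF c).1], by linarith [(hF c).2]⟩

theorem measurable_imputedRank {F : ℝ → ℝ} (hF : Measurable F) :
    Measurable fun z : ℝ × ℝ => imputedRank F z.1 z.2 :=
  Measurable.ite (measurableSet_le measurable_fst measurable_snd) (hF.comp measurable_fst)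
    (((hF.comp measurable_snd).const_add 1).div_const 2)

theorem integrable_imputedRank_pow {F : ℝ → ℝ} (hFm : Measurable F) (hF : ∀ x, F x ∈ Icc 0 1)
    {ρ : Measure (ℝ × ℝ)} [IsFiniteMeasure ρ] (n : ℕ) :
    Integrable (fun z : ℝ × ℝ => imputedRank F z.1 z.2 ^ n) ρ := by
  refine .of_bound ((measurable_imputedRank hFm).pow_const n).aestronglyMeasurable 1
    (ae_of_all _ fun z => ?_)
  obtain ⟨h0, h1⟩ := imputedRank_mem_Icc hF z.1 z.2
  rw [norm_pow, Real.norm_of_nonneg h0]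
  exact pow_le_one₀ h0 h1

section ContinuousCDF

variable {μ : Measure ℝ} [IsProbabilityMeasure μ]

theorem integral_imputedRank_cdf (hμ : Continuous (cdf μ)) (c : ℝ) :
    ∫ x, imputedRank (cdf μ) x c ∂μ = 1 / 2 := by
  calc ∫ x, imputedRank (cdf μ) x c ∂μ
      = (∫ u in 0..cdf μ c, u) + (1 - cdf μ c) * ((1 + cdf μ c) / 2) :=
        integral_ite_le_comp_cdf hμ (g := fun u => u) continuous_id.integrableOn_Ioc c _
    _ = 1 / 2 := by
        rw [integral_id]
        ring

theorem integral_imputedRank_cdf_sq (hμ : Continuous (cdf μ)) (c : ℝ) :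
    ∫ x, imputedRank (cdf μ) x c ^ 2 ∂μ = 1 / 3 - (1 - cdf μ c) ^ 3 / 12 := by
  calc ∫ x, imputedRank (cdf μ) x c ^ 2 ∂μ
      = ∫ x, (if x ≤ c then cdf μ x ^ 2 else ((1 + cdf μ c) / 2) ^ 2) ∂μ := by
        simp only [imputedRank, apply_ite (· ^ 2)]
    _ = (∫ u in 0..cdf μ c, u ^ 2) + (1 - cdf μ c) * ((1 + cdf μ c) / 2) ^ 2 :=
        integral_ite_le_comp_cdf hμ (continuous_pow 2).integrableOn_Ioc c _
    _ = 1 / 3 - (1 - cdf μ c) ^ 3 / 12 := by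
        rw [integral_pow]
        ring

theorem integral_imputedRank_comp {Ω : Type*} [MeasurableSpace Ω] {P : Measure Ω}
    [IsProbabilityMeasure P] {X C : Ω → ℝ} (hX : Measurable X) (hC : Measurable C)
    (hXC : IndepFun X C P) (hXμ : P.map X = μ) (hμ : Continuous (cdf μ)) :
    ∫ ω, imputedRank (cdf μ) (X ω) (C ω) ∂P = 1 / 2 := by
  rw [hXC.integral_comp_eq_integral_integral_map hX.aemeasurable hC.aemeasurable
    (G := fun z => imputedRank (cdf μ) z.1 z.2)
    (by simpa using integrable_imputedRank_pow hμ.measurable (cdf_mem_Icc μ) 1), hXμ]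
  simp [integral_imputedRank_cdf hμ]

theorem integral_imputedRank_comp_sq {Ω : Type*} [MeasurableSpace Ω] {P : Measure Ω}
    [IsProbabilityMeasure P] {X C : Ω → ℝ} (hX : Measurable X) (hC : Measurable C)
    (hXC : IndepFun X C P) (hXμ : P.map X = μ) (hμ : Continuous (cdf μ)) :
    ∫ ω, imputedRank (cdf μ) (X ω) (C ω) ^ 2 ∂P
      = 1 / 3 - (∫ ω, (1 - cdf μ (C ω)) ^ 3 ∂P) / 12 := by
  have hS3 : Integrable (fun ω => (1 - cdf μ (C ω)) ^ 3) P := by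
    refine .of_bound (((continuous_const.sub hμ).pow 3).measurable.comp hC).aestronglyMeasurable
      1 (ae_of_all _ fun ω => ?_)
    have h0 : 0 ≤ 1 - cdf μ (C ω) := sub_nonneg.2 (cdf_le_one μ _)
    rw [norm_pow, Real.norm_of_nonneg h0]
    exact pow_le_one₀ h0 (by linarith [cdf_nonneg μ (C ω)])
  rw [hXC.integral_comp_eq_integral_integral_map hX.aemeasurable hC.aemeasurable
    (G := fun z => imputedRank (cdf μ) z.1 z.2 ^ 2)
    (integrable_imputedRank_pow hμ.measurable (cdf_mem_Icc μ) 2), hXμ]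
  simp only [integral_imputedRank_cdf_sq hμ]
  rw [integral_sub (integrable_const _) (hS3.div_const 12), integral_const, integral_div]
  simp

end ContinuousCDF

/-- Variance statement of Theorem 1: for independent real random variables `X`, `C` on a
probability space, with `F x = P{X ≤ x}` continuous, `S = 1 - F`, `T = min X C`,
`Δ = 1{X ≤ C}`, and `ℛ = Δ·F(T) + (1 − Δ)·(1 − S(T)/2)`, we have
`Var(ℛ) = (1/12)·(1 − E[S(C)³])`, where `Var(ℛ) = E[ℛ²] − (E[ℛ])²`. -/
theorem imputedRank_variance {Ω : Type*} [MeasurableSpace Ω] (P : Measure Ω)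
    [IsProbabilityMeasure P]
    (X C : Ω → ℝ) (hX : Measurable X) (hC : Measurable C)
    (hXC : ProbabilityTheory.IndepFun X C P)
    (F : ℝ → ℝ) (hF : ∀ x, F x = (P {ω | X ω ≤ x}).toReal)
    (hFc : Continuous F) :
    (∫ ω, ((if X ω ≤ C ω then (1 : ℝ) else 0) * F (min (X ω) (C ω))
        + (1 - if X ω ≤ C ω then (1 : ℝ) else 0)
          * (1 - (1 - F (min (X ω) (C ω))) / 2)) ^ 2 ∂P)
      - (∫ ω, ((if X ω ≤ C ω then (1 : ℝ) else 0) * F (min (X ω) (C ω))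
        + (1 - if X ω ≤ C ω then (1 : ℝ) else 0)
          * (1 - (1 - F (min (X ω) (C ω))) / 2)) ∂P) ^ 2
      = (1 / 12) * (1 - ∫ ω, (1 - F (C ω)) ^ 3 ∂P) := by
  obtain ⟨μ, hXμ⟩ : ∃ μ, P.map X = μ := ⟨_, rfl⟩
  have : IsProbabilityMeasure μ := hXμ ▸ Measure.isProbabilityMeasure_map hX.aemeasurable
  have hFμ : F = cdf μ := funext fun x => by
    rw [hF, cdf_eq_real, measureReal_def, ← hXμ, Measure.map_apply hX measurableSet_Iic]
    rfl
  subst hFμ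
  simp only [imputedRank_eq, integral_imputedRank_comp hX hC hXC hXμ hFc,
    integral_imputedRank_comp_sq hX hC hXC hXμ hFc]
  ring
end

section
/- In the self-consistent (Kaplan–Meier) estimator setup with data e_1, …, e_n, indicators δ_1, …, δ_n ∈ {0,1} satisfying δ_i = 1 whenever e_i = max_j e_j, and real covariates X_1, …, X_n with sample mean X̄ = (1/n)∑_j X_j and at-risk average X̄(u) = (∑_j X_j·1{e_j ≥ u}) / Y(u), the Wilcoxon R-estimating function equals a Kaplan–Meier-weighted logrank estimating function: ∑_{i=1}^n [ δ_i·(F̂(e_i) + F̂(e_i⁻))/2 + (1 − δ_i)·(1 − (1 − F̂(e_i))/2) ]·(X_i − X̄) = −(1/2)·∑_{i=1}^n δ_i·(1 − F̂(e_i⁻))·(X_i − X̄(e_i)). -/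
open Finset
open scoped Classical

/-- Number at risk at `v`: `Y(v) = #{j : e_j ≥ v}` (as a real number). -/
noncomputable def kmY {n : ℕ} (e : Fin n → ℝ) (v : ℝ) : ℝ :=
  ((Finset.univ.filter fun j => v ≤ e j).card : ℝ)

/-- Number of (uncensored) events at `v`: `d(v) = #{i : e_i = v ∧ δ_i = 1}`. -/
noncomputable def kmD {n : ℕ} (e : Fin n → ℝ) (δ : Fin n → ℝ) (v : ℝ) : ℝ :=
  ((Finset.univ.filter fun i => e i = v ∧ δ i = 1).card : ℝ)

/-- Self-consistent (Kaplan–Meier) estimator: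
`F̂(t) = 1 − ∏_{v ∈ V, v ≤ t} (1 − d(v)/Y(v))`, `V` the set of distinct data values. -/
noncomputable def kmF {n : ℕ} (e : Fin n → ℝ) (δ : Fin n → ℝ) (t : ℝ) : ℝ :=
  1 - ∏ v ∈ (Finset.univ.image e).filter (fun v => v ≤ t), (1 - kmD e δ v / kmY e v)

/-- Left limit of the self-consistent estimator:
`F̂(t⁻) = 1 − ∏_{v ∈ V, v < t} (1 − d(v)/Y(v))`. -/
noncomputable def kmFminus {n : ℕ} (e : Fin n → ℝ) (δ : Fin n → ℝ) (t : ℝ) : ℝ :=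
  1 - ∏ v ∈ (Finset.univ.image e).filter (fun v => v < t), (1 - kmD e δ v / kmY e v)

/-!
Writing `Ŝ = 1 - F̂`, the telescoping expansion of the product `Ŝ(t) = ∏ (1 - d/Y)`
(`Finset.prod_one_sub_ordered`) shows that `F̂` puts mass `δ_i Ŝ(e_i⁻) / Y(e_i)` on each
observation. Exchanging the order of summation then gives, for every `x`,
`∑_k F̂(e_k) x_k = ∑_i δ_i Ŝ(e_i⁻) x̄(e_i)`, with `x̄(u)` the at-risk average of `x`.
The R-score of observation `i` is `1 - Ŝ(e_i)/2 - δ_i Ŝ(e_i⁻)/2`, so applying this to the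
centred covariates `x = X - X̄`, whose sum vanishes, yields the theorem.
-/

section

variable {n : ℕ}

lemma sum_sub_mean_eq_zero (X : Fin n → ℝ) :
    ∑ i, (X i - (1 / (n : ℝ)) * ∑ j, X j) = 0 := by
  rcases Nat.eq_zero_or_pos n with rfl | hn
  · simp
  · rw [sum_sub_distrib, sum_const, card_univ, Fintype.card_fin, nsmul_eq_mul]
    field_simp
    ring

lemma kmY_eq_sum_ite (e : Fin n → ℝ) (v : ℝ) :
    kmY e v = ∑ j, if v ≤ e j then (1 : ℝ) else 0 := by
  rw [sum_boole, kmY]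

lemma kmY_self_ne_zero (e : Fin n → ℝ) (i : Fin n) : kmY e (e i) ≠ 0 := by
  rw [kmY, Nat.cast_ne_zero, ← pos_iff_ne_zero, card_pos]
  exact ⟨i, mem_filter.2 ⟨mem_univ i, le_rfl⟩⟩

lemma atRisk_mean_sub_const (e X : Fin n → ℝ) (i : Fin n) (c : ℝ) :
    (∑ j, (X j - c) * (if e i ≤ e j then (1 : ℝ) else 0)) / kmY e (e i)
      = (∑ j, X j * (if e i ≤ e j then (1 : ℝ) else 0)) / kmY e (e i) - c := by
  have hY := kmY_self_ne_zero e i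
  simp only [sub_mul, sum_sub_distrib, ← mul_sum, ← kmY_eq_sum_ite]
  field_simp

lemma kmD_eq_sum (e δ : Fin n → ℝ) (hδ : ∀ i, δ i = 0 ∨ δ i = 1) (v : ℝ) :
    kmD e δ v = ∑ i with e i = v, δ i := by
  rw [kmD, ← filter_filter, ← sum_boole]
  refine sum_congr rfl fun i _ => ?_
  rcases hδ i with h | h <;> simp [h]

lemma kmF_eq_sum_jumps (e δ : Fin n → ℝ) (t : ℝ) :
    kmF e δ t = ∑ v ∈ (univ.image e).filter (· ≤ t),
      kmD e δ v / kmY e v * (1 - kmFminus e δ v) := by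
  rw [kmF, prod_one_sub_ordered, sub_sub_cancel]
  refine sum_congr rfl fun v hv => ?_
  have hvt := (mem_filter.1 hv).2
  rw [kmFminus, sub_sub_cancel, filter_filter,
    filter_congr fun w _ => and_iff_right_of_imp fun hwv => hwv.le.trans hvt]

lemma kmF_eq_sum_filter_le (e δ : Fin n → ℝ) (hδ : ∀ i, δ i = 0 ∨ δ i = 1) (t : ℝ) :
    kmF e δ t = ∑ i with e i ≤ t, δ i * (1 - kmFminus e δ (e i)) / kmY e (e i) := by
  rw [kmF_eq_sum_jumps,
    ← sum_fiberwise_of_maps_to (g := e) (t := (univ.image e).filter (· ≤ t))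
      fun i hi => mem_filter.2 ⟨mem_image_of_mem e (mem_univ i), (mem_filter.1 hi).2⟩]
  refine sum_congr rfl fun v hv => ?_
  have hvt := (mem_filter.1 hv).2
  rw [kmD_eq_sum e δ hδ, filter_filter,
    filter_congr fun i _ => and_iff_right_of_imp fun h => h ▸ hvt, sum_div, sum_mul]
  exact sum_congr rfl fun i hi => by rw [(mem_filter.1 hi).2, div_mul_eq_mul_div]

lemma sum_kmF_mul_eq_sum_atRisk (e δ : Fin n → ℝ) (hδ : ∀ i, δ i = 0 ∨ δ i = 1)
    (x : Fin n → ℝ) :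
    ∑ k, kmF e δ (e k) * x k
      = ∑ i, δ i * (1 - kmFminus e δ (e i))
          * ((∑ j, x j * (if e i ≤ e j then (1 : ℝ) else 0)) / kmY e (e i)) := by
  simp only [kmF_eq_sum_filter_le e δ hδ, sum_filter, sum_mul]
  rw [sum_comm]
  refine sum_congr rfl fun i _ => ?_
  rw [sum_div, mul_sum]
  refine sum_congr rfl fun j _ => ?_
  split_ifs <;> ring

end

theorem wilcoxon_R_eq_weighted_logrank_general (n : ℕ)
    (e : Fin n → ℝ) (δ : Fin n → ℝ)
    (hδ : ∀ i, δ i = 0 ∨ δ i = 1)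
    (X : Fin n → ℝ) :
    ∑ i, (δ i * ((kmF e δ (e i) + kmFminus e δ (e i)) / 2)
          + (1 - δ i) * (1 - (1 - kmF e δ (e i)) / 2))
        * (X i - (1 / (n : ℝ)) * ∑ j, X j)
      = -(1 / 2) * ∑ i, δ i * (1 - kmFminus e δ (e i))
          * (X i - (∑ j, X j * (if e i ≤ e j then (1 : ℝ) else 0)) / kmY e (e i)) := by
  set M := (1 / (n : ℝ)) * ∑ j, X j
  have hlogrank := sum_kmF_mul_eq_sum_atRisk e δ hδ (fun i => X i - M)
  simp only [atRisk_mean_sub_const] at hlogrank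
  calc _ = (∑ i, (X i - M) + ∑ i, kmF e δ (e i) * (X i - M)
          - ∑ i, δ i * (1 - kmFminus e δ (e i)) * (X i - M)) / 2 := by
        rw [← sum_add_distrib, ← sum_sub_distrib, sum_div]
        exact sum_congr rfl fun i _ => by ring
    _ = _ := by
        rw [sum_sub_mean_eq_zero, hlogrank, zero_add, ← sum_sub_distrib, sum_div, mul_sum]
        exact sum_congr rfl fun i _ => by ring

/-- Theorem 3: the Wilcoxon R-estimating function equals the Kaplan–Meier-weighted
logrank estimating function with weight `−(1/2)·Ŝ(u⁻) = −(1/2)·(1 − F̂(u⁻))`: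
`∑_i ℛ̂_i (X_i − X̄) = −(1/2) ∑_i δ_i (1 − F̂(e_i⁻)) (X_i − X̄(e_i))`,
where `X̄ = (1/n) ∑_j X_j` and `X̄(u) = (∑_j X_j 1{e_j ≥ u}) / Y(u)`. -/
theorem wilcoxon_R_eq_weighted_logrank (n : ℕ) (hn : 1 ≤ n)
    (e : Fin n → ℝ) (δ : Fin n → ℝ)
    (hδ : ∀ i, δ i = 0 ∨ δ i = 1)
    (hmax : ∀ i, (∀ j, e j ≤ e i) → δ i = 1)
    (X : Fin n → ℝ) :
    ∑ i, (δ i * ((kmF e δ (e i) + kmFminus e δ (e i)) / 2)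
          + (1 - δ i) * (1 - (1 - kmF e δ (e i)) / 2))
        * (X i - (1 / (n : ℝ)) * ∑ j, X j)
      = -(1 / 2) * ∑ i, δ i * (1 - kmFminus e δ (e i))
          * (X i - (∑ j, X j * (if e i ≤ e j then (1 : ℝ) else 0)) / kmY e (e i)) :=
  wilcoxon_R_eq_weighted_logrank_general n e δ hδ X
end

section
/- Let F be a continuous CDF. Then for every real c, the integral over (c, ∞) of the function u ↦ (1 − F(u))² with respect to the Lebesgue–Stieltjes measure μ_F equals (1 − F(c))³/3. In particular, ∫_ℝ (1 − F(u))² dμ_F(u) = 1/3. -/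
/-!
Probability integral transform: for continuous `F` every sublevel set `{F ≤ y}` with `0 < y < 1`
is a half-line `(-∞, t]` with `F t = y`, so `F` pushes `μ_F` forward to Lebesgue measure on
`(0, 1]`. Comparing masses, `{F ≤ F c}` and `(-∞, c]` differ by a `μ_F`-null set, and the
change of variables gives
`∫_{(c, ∞)} (1 - F)² dμ_F = ∫_{(F c, 1]} (1 - y)² dy = (1 - F c)³ / 3`.
-/

open MeasureTheory Filter Set

theorem Monotone.exists_apply_eq_and_preimage_Iic_eq {α β : Type*}
    [ConditionallyCompleteLinearOrder α] [TopologicalSpace α] [OrderTopology α]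
    [DenselyOrdered α] [NoMaxOrder α] [LinearOrder β] [TopologicalSpace β]
    [OrderClosedTopology β] {f : α → β} (hf : Monotone f) (hc : Continuous f) {y : β}
    (hne : (f ⁻¹' Iic y).Nonempty) (hbdd : BddAbove (f ⁻¹' Iic y)) :
    ∃ t, f t = y ∧ f ⁻¹' Iic y = Iic t := by
  set t := sSup (f ⁻¹' Iic y)
  have ht : f t ≤ y := (isClosed_Iic.preimage hc).csSup_mem hne hbdd
  have hS : f ⁻¹' Iic y = Iic t :=
    Subset.antisymm (fun u hu => le_csSup hbdd hu) fun u hu => (hf hu).trans ht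
  refine ⟨t, ht.antisymm (not_lt.1 fun hlt => ?_), hS⟩
  have hsub : f ⁻¹' Iio y ⊆ interior (Iic t) :=
    interior_maximal (hS ▸ preimage_mono Iio_subset_Iic_self) (isOpen_Iio.preimage hc)
  rw [interior_Iic] at hsub
  exact lt_irrefl t (hsub hlt)

theorem Real.volume_restrict_Ioc_Iic (a b y : ℝ) :
    volume.restrict (Ioc a b) (Iic y) = ENNReal.ofReal (min b y - a) := by
  rw [Measure.restrict_apply measurableSet_Iic, inter_comm, Ioc_inter_Iic, Real.volume_Ioc]

namespace StieltjesFunction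

variable {F : StieltjesFunction ℝ}

theorem map_measure_eq_volume_restrict_Ioc (hFc : Continuous F)
    (h0 : Tendsto F atBot (nhds 0)) (h1 : Tendsto F atTop (nhds 1)) :
    F.measure.map F = volume.restrict (Ioc 0 1) := by
  have := F.isProbabilityMeasure h0 h1
  refine Measure.ext_of_Iic _ _ fun y => ?_
  rw [Measure.map_apply hFc.measurable measurableSet_Iic, Real.volume_restrict_Ioc_Iic, sub_zero]
  by_cases hy1 : 1 ≤ y
  · have hS : F ⁻¹' Iic y = univ :=
      eq_univ_of_forall fun u => (F.mono.ge_of_tendsto h1 u).trans hy1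
    rw [hS, MeasureTheory.measure_univ, min_eq_left hy1, ENNReal.ofReal_one]
  obtain hS | hS := (F ⁻¹' Iic y).eq_empty_or_nonempty
  · have hy0 : y ≤ 0 := not_lt.1 fun hy => by
      obtain ⟨u, hu⟩ := (h0.eventually_lt_const hy).exists
      exact hS.subset (show F u ≤ y from hu.le)
    rw [hS, measure_empty, eq_comm, ENNReal.ofReal_eq_zero]
    exact (min_le_right _ _).trans hy0
  · have hbdd : BddAbove (F ⁻¹' Iic y) := by
      obtain ⟨M, hM⟩ := eventually_atTop.1 (h1.eventually_const_lt (not_le.1 hy1))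
      exact ⟨M, fun u hu => not_lt.1 fun hMu => (hM u hMu.le).not_ge hu⟩
    obtain ⟨t, rfl, hS⟩ := F.mono.exists_apply_eq_and_preimage_Iic_eq hFc hS hbdd
    rw [hS, F.measure_Iic h0, sub_zero, min_eq_right (not_le.1 hy1).le]

theorem preimage_Iic_ae_eq_Iic (hFc : Continuous F)
    (h0 : Tendsto F atBot (nhds 0)) (h1 : Tendsto F atTop (nhds 1)) (c : ℝ) :
    F ⁻¹' Iic (F c) =ᵐ[F.measure] Iic c := by
  have := F.isProbabilityMeasure h0 h1
  have hsub : Iic c ⊆ F ⁻¹' Iic (F c) := fun _ hu => F.mono hu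
  have hmeas : F.measure (F ⁻¹' Iic (F c)) = F.measure (Iic c) := by
    rw [← Measure.map_apply hFc.measurable measurableSet_Iic,
      map_measure_eq_volume_restrict_Ioc hFc h0 h1, Real.volume_restrict_Ioc_Iic, sub_zero,
      min_eq_right (F.mono.ge_of_tendsto h1 c), F.measure_Iic h0, sub_zero]
  exact (ae_eq_of_subset_of_measure_ge hsub hmeas.le measurableSet_Iic.nullMeasurableSet
    (measure_ne_top _ _)).symm

variable {E : Type*} [NormedAddCommGroup E] [NormedSpace ℝ E]

theorem integral_comp_eq_integral_Ioc (hFc : Continuous F)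
    (h0 : Tendsto F atBot (nhds 0)) (h1 : Tendsto F atTop (nhds 1)) {g : ℝ → E}
    (hg : AEStronglyMeasurable g (volume.restrict (Ioc 0 1))) :
    ∫ u, g (F u) ∂F.measure = ∫ y in Ioc 0 1, g y := by
  rw [← map_measure_eq_volume_restrict_Ioc hFc h0 h1] at hg ⊢
  exact (integral_map hFc.aemeasurable hg).symm

theorem setIntegral_Ioi_comp_eq_integral_Ioc (hFc : Continuous F)
    (h0 : Tendsto F atBot (nhds 0)) (h1 : Tendsto F atTop (nhds 1)) {g : ℝ → E}
    (hg : AEStronglyMeasurable g (volume.restrict (Ioc 0 1))) (c : ℝ) :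
    ∫ u in Ioi c, g (F u) ∂F.measure = ∫ y in Ioc (F c) 1, g y := by
  have hIoi : F ⁻¹' Ioi (F c) =ᵐ[F.measure] Ioi c := by
    simpa only [← preimage_compl, compl_Iic] using (preimage_Iic_ae_eq_Iic hFc h0 h1 c).compl
  rw [← map_measure_eq_volume_restrict_Ioc hFc h0 h1] at hg
  rw [← setIntegral_congr_set hIoi,
    ← setIntegral_map _root_.measurableSet_Ioi hg hFc.aemeasurable,
    map_measure_eq_volume_restrict_Ioc hFc h0 h1,
    Measure.restrict_restrict _root_.measurableSet_Ioi, inter_comm, Ioc_inter_Ioi,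
    max_eq_right (F.mono.le_of_tendsto h0 c)]

end StieltjesFunction

theorem integral_Ioc_one_sub_sq {a : ℝ} (ha : a ≤ 1) :
    ∫ y in Ioc a 1, (1 - y) ^ 2 = (1 - a) ^ 3 / 3 := by
  rw [← intervalIntegral.integral_of_le ha,
    intervalIntegral.integral_comp_sub_left (fun x => x ^ 2) 1, integral_pow]
  ring

/-- For a continuous CDF `F`, the integral of `u ↦ (1 − F u)²` over `(c, ∞)` with respect
to the Lebesgue–Stieltjes measure `μ_F` equals `(1 − F c)³ / 3`; in particular the
integral over all of `ℝ` is `1/3`. -/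
theorem survival_sq_integral (F : StieltjesFunction ℝ) (hFc : Continuous F)
    (h0 : Filter.Tendsto F Filter.atBot (nhds 0))
    (h1 : Filter.Tendsto F Filter.atTop (nhds 1)) :
    (∀ c : ℝ, ∫ u in Set.Ioi c, (1 - F u) ^ 2 ∂F.measure = (1 - F c) ^ 3 / 3) ∧
    (∫ u, (1 - F u) ^ 2 ∂F.measure = 1 / 3) := by
  have hg : AEStronglyMeasurable (fun y : ℝ => (1 - y) ^ 2) (volume.restrict (Ioc 0 1)) :=
    (by fun_prop : Continuous fun y : ℝ => (1 - y) ^ 2).aestronglyMeasurable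
  refine ⟨fun c => ?_, ?_⟩
  · rw [F.setIntegral_Ioi_comp_eq_integral_Ioc hFc h0 h1 hg c,
      integral_Ioc_one_sub_sq (F.mono.ge_of_tendsto h1 c)]
  · rw [F.integral_comp_eq_integral_Ioc hFc h0 h1 hg, integral_Ioc_one_sub_sq zero_le_one]
    norm_num
end
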